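/- In the evaluation-map counterexample: if E is a non-normable complex locally convex space which is a locally convex direct limit E = lim_→ E_n of an increasing sequence of normed complex spaces E_n, and E′ denotes the dual space with the topology of bounded convergence, then the evaluation map f : E′ × E → ℂ, (λ, x) ↦ λ(x), is not continuous, although its restriction f|_{E′ × E_n} is continuous ℂ-bilinear (hence complex analytic) for each n. -/

import Mathlib

/-!
If the evaluation `E' × E → ℂ` were continuous at `(0, 0)`, some product `U × V` of
`0`-neighbourhoods would be mapped into the closed unit disc. The strong neighbourhood `U`
contains the polar `S°` of a bounded set `S`, so `S° ⊆ V°`. By Hahn–Banach, a closed absolutely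
convex set `C` contains every set whose polar contains `C°`. Hence `S ⊆ c • C` forces
`V ⊆ c • C` for every closed absolutely convex `0`-neighbourhood `C`, so `V` is bounded and `E`
would be normable.

On `E' × E n` the evaluation factors through the continuous restriction `E' → (E n)'`, into a
normed dual, where evaluation is a bounded bilinear map.
-/

open Set Pointwise Filter Topology Bornology

section Polar

open scoped ComplexOrder

variable {𝕜 E : Type*} [RCLike 𝕜] [AddCommGroup E] [Module 𝕜 E]

lemma LocallyConvexSpace.of_real [TopologicalSpace E] [Module ℝ E] [IsScalarTower ℝ 𝕜 E]
    [LocallyConvexSpace ℝ E] : LocallyConvexSpace 𝕜 E where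
  convex_basis x := by
    convert LocallyConvexSpace.convex_basis (𝕜 := ℝ) x using 3 with s
    exact ⟨fun h => h.lift ℝ, convex_of_nonneg_surjective_algebraMap _
      fun _ => RCLike.nonneg_iff_exists_ofReal.mp⟩

lemma Balanced.norm_apply_lt_of_re_apply_lt {s : Set E} (hs : Balanced 𝕜 s) (f : E →ₗ[𝕜] 𝕜)
    {u : ℝ} (hf : ∀ z ∈ s, RCLike.re (f z) < u) {z : E} (hz : z ∈ s) : ‖f z‖ < u := by
  obtain ⟨c, hc, hcz⟩ := RCLike.exists_norm_eq_mul_self (f z)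
  simpa [← hcz] using hf (c • z) (hs.smul_mem hc.le hz)

variable [TopologicalSpace E] [ContinuousSMul 𝕜 E]

lemma StrongDual.exists_polar_subset_of_mem_nhds_zero {U : Set (StrongDual 𝕜 E)}
    (hU : U ∈ 𝓝 0) : ∃ S, IsVonNBounded 𝕜 S ∧ StrongDual.polar 𝕜 S ⊆ U := by
  obtain ⟨⟨S, ε⟩, ⟨hS, hε⟩, hSU⟩ :=
    (ContinuousLinearMap.hasBasis_nhds_zero_of_basis Metric.nhds_basis_closedBall).mem_iff.1 hU
  set c : 𝕜 := ((ε⁻¹ : ℝ) : 𝕜)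
  refine ⟨c • S, ?_, fun f hf => hSU fun x hx => ?_⟩
  · simpa [image_smul] using hS.image (c • ContinuousLinearMap.id 𝕜 E)
  · have := (StrongDual.mem_polar_iff 𝕜 _).1 hf (c • x) (smul_mem_smul_set hx)
    rw [map_smul, norm_smul, RCLike.norm_ofReal, abs_inv, abs_of_pos hε, inv_mul_le_iff₀ hε,
      mul_one] at this
    simpa using this

variable [IsTopologicalAddGroup E] [Module ℝ E] [IsScalarTower ℝ 𝕜 E] [LocallyConvexSpace ℝ E]

lemma subset_of_polar_subset_polar {C V : Set E} (hC : IsClosed C) (hCa : AbsConvex 𝕜 C)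
    (hC0 : (0 : E) ∈ C) (hCV : StrongDual.polar 𝕜 C ⊆ StrongDual.polar 𝕜 V) : V ⊆ C := by
  intro x hxV
  by_contra hxC
  obtain ⟨f, u, hfC, hfx⟩ :=
    RCLike.geometric_hahn_banach_closed_point (𝕜 := 𝕜) (hCa.2.lift ℝ) hC hxC
  have hu : 0 < u := by simpa using hfC 0 hC0
  have hnorm (z : E) : ‖((u⁻¹ : 𝕜) • f) z‖ = ‖f z‖ / u := by
    simp [hu.le, div_eq_inv_mul]
  have hfu : (u⁻¹ : 𝕜) • f ∈ StrongDual.polar 𝕜 V :=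
    hCV <| (StrongDual.mem_polar_iff 𝕜 _).2 fun z hz => by
      rw [hnorm, div_le_one hu]
      exact (hCa.1.norm_apply_lt_of_re_apply_lt (f : E →ₗ[𝕜] 𝕜) hfC hz).le
  have hfxV := (StrongDual.mem_polar_iff 𝕜 _).1 hfu x hxV
  rw [hnorm, div_le_one hu] at hfxV
  exact hfxV.not_gt (hfx.trans_le (RCLike.re_le_norm _))

lemma isVonNBounded_of_polar_subset_polar {S V : Set E} (hS : IsVonNBounded 𝕜 S)
    (hSV : StrongDual.polar 𝕜 S ⊆ StrongDual.polar 𝕜 V) : IsVonNBounded 𝕜 V := by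
  have := LocallyConvexSpace.of_real (𝕜 := 𝕜) (E := E)
  intro W hW
  obtain ⟨C, ⟨hC, hCc, hCa⟩, hCW⟩ := (nhds_hasBasis_absConvex_closed 𝕜 E).mem_iff.1 hW
  filter_upwards [hS hC, eventually_ne_cobounded 0] with c hSc hc
  have hcC : StrongDual.polar 𝕜 (c • C) ⊆ StrongDual.polar 𝕜 V :=
    (LinearMap.polar_antitone _ hSc).trans hSV
  exact (subset_of_polar_subset_polar (hCc.smul_of_ne_zero hc) ⟨hCa.1.smul c, hCa.2.smul c⟩
    (zero_mem_smul_set (mem_of_mem_nhds hC)) hcC).trans (smul_set_mono hCW)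

theorem exists_isVonNBounded_mem_nhds_zero_of_continuousAt_apply
    (h : ContinuousAt (fun q : StrongDual 𝕜 E × E => q.1 q.2) (0, 0)) :
    ∃ V ∈ 𝓝 (0 : E), IsVonNBounded 𝕜 V := by
  have hball : (fun q : StrongDual 𝕜 E × E => q.1 q.2) ⁻¹' Metric.closedBall 0 1 ∈ 𝓝 (0, 0) :=
    h.preimage_mem_nhds (by simpa using Metric.closedBall_mem_nhds (0 : 𝕜) one_pos)
  obtain ⟨U, hU, V, hV, hUV⟩ := mem_nhds_prod_iff.1 hball
  obtain ⟨S, hS, hSU⟩ := StrongDual.exists_polar_subset_of_mem_nhds_zero hU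
  have hUV' : U ⊆ StrongDual.polar 𝕜 V := fun f hf =>
    (StrongDual.mem_polar_iff 𝕜 _).2 fun x hx => by simpa using hUV (mk_mem_prod hf hx)
  exact ⟨V, hV, isVonNBounded_of_polar_subset_polar hS (hSU.trans hUV')⟩

end Polar

lemma StrongDual.continuous_apply_comp {𝕜 E F : Type*} [NontriviallyNormedField 𝕜]
    [AddCommGroup E] [Module 𝕜 E] [TopologicalSpace E] [NormedAddCommGroup F] [NormedSpace 𝕜 F]
    (g : F →L[𝕜] E) : Continuous fun q : StrongDual 𝕜 E × F => q.1 (g q.2) :=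
  isBoundedBilinearMap_apply.continuous.comp
    ((ContinuousLinearMap.precomp 𝕜 g).continuous.prodMap continuous_id)

theorem evaluation_map_counterexample
    {En : ℕ → Type*} [∀ n, NormedAddCommGroup (En n)] [∀ n, NormedSpace ℂ (En n)]
    {EL : Type*} [AddCommGroup EL] [Module ℂ EL] [Module ℝ EL] [IsScalarTower ℝ ℂ EL]
    [TopologicalSpace EL] [IsTopologicalAddGroup EL] [ContinuousSMul ℂ EL]
    [LocallyConvexSpace ℝ EL]
    (ι : ∀ n, En n →ₗ[ℂ] EL)
    (hιc : ∀ n, Continuous (ι n))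
    (hnonnorm : ¬ ∃ V ∈ nhds (0 : EL), Bornology.IsVonNBounded ℂ V) :
    ¬ Continuous (fun q : (EL →L[ℂ] ℂ) × EL => q.1 q.2) ∧
      ∀ n, Continuous (fun q : (EL →L[ℂ] ℂ) × En n => q.1 (ι n q.2)) :=
  ⟨fun h => hnonnorm (exists_isVonNBounded_mem_nhds_zero_of_continuousAt_apply h.continuousAt),
    fun n => StrongDual.continuous_apply_comp ⟨ι n, hιc n⟩⟩
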